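/- Let φ : Σ → ℝ be Hölder continuous and let μ_φ be a Gibbs measure for φ. For all real numbers a > 0, b > 0, c > 0, g > max(b − c, 0) and every λ > 0 there exists N such that for every n ≥ N the following holds: for every family 𝒞 of pairwise distinct cylinders of length n with card(𝒞) ≤ 2^{bn} and μ_φ(C) ≤ 2^{-(a+g)n} for every C ∈ 𝒞, one has μ_φ({x ∈ Σ : card{C ∈ 𝒞 : τ(x,C) ≤ 2^{an}} ≥ 2^{cn}}) ≤ 2^{-λn}. -/

import Mathlib

open Filter MeasureTheory Set
open scoped ENNReal

noncomputable section

/-- The one-sided full shift space on two symbols. -/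
abbrev Sig : Type := ℕ → Bool

/-- The metric `d(x,y) = 2^{-n}` where `n` is the first index at which `x` and `y` differ. -/
noncomputable instance : MetricSpace Sig :=
  PiNat.metricSpaceOfDiscreteUniformity fun _ => rfl

/-- The shift map. -/
def shift (x : Sig) : Sig := fun n => x (n + 1)

/-- The cylinder of length `n` containing `x`. -/
def cylinder (x : Sig) (n : ℕ) : Set Sig := {y : Sig | ∀ i < n, y i = x i}

/-- The Birkhoff sum `S_n φ(x)`. -/
def birkhoff (φ : Sig → ℝ) (n : ℕ) (x : Sig) : ℝ :=
  ∑ j ∈ Finset.range n, φ (shift^[j] x)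

/-- `φ` is Hölder continuous. -/
def IsHolder (φ : Sig → ℝ) : Prop :=
  ∃ c > (0 : ℝ), ∃ a > (0 : ℝ), ∀ x y : Sig, |φ x - φ y| ≤ c * dist x y ^ a

/-- `μ` is a Gibbs measure for the potential `φ` with Gibbs constant `γ > 1`:
`μ` is an invariant Borel probability measure and
`γ⁻¹ 2^{S_nφ(x)} ≤ μ(C_n(x)) ≤ γ 2^{S_nφ(x)}` for all `x` and `n ≥ 1`. -/
def IsGibbs (φ : Sig → ℝ) (γ : ℝ) (μ : Measure Sig) : Prop :=
  1 < γ ∧ IsProbabilityMeasure μ ∧ Measure.map shift μ = μ ∧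
    ∀ (x : Sig) (n : ℕ), 1 ≤ n →
      ENNReal.ofReal (γ⁻¹ * 2 ^ birkhoff φ n x) ≤ μ (cylinder x n) ∧
      μ (cylinder x n) ≤ ENNReal.ofReal (γ * 2 ^ birkhoff φ n x)

/-- The first hitting time `τ(x,C) = inf {l ≥ 1 : σ^l x ∈ C}`, equal to `∞` if no such `l`. -/
def hitTime (x : Sig) (C : Set Sig) : ℕ∞ :=
  sInf {m : ℕ∞ | ∃ l : ℕ, m = l ∧ 1 ≤ l ∧ shift^[l] x ∈ C}

/-- Base 2 logarithm on `ℕ∞` with values in `ℝ≥0∞`. -/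
def elog2 (t : ℕ∞) : ℝ≥0∞ :=
  WithTop.recTopCoe ⊤ (fun n : ℕ => ENNReal.ofReal (Real.logb 2 n)) t

/-- `α(x,y) = liminf (1/n) log₂ τ_n(x,y)`. -/
def alpha (x y : Sig) : ℝ≥0∞ :=
  Filter.atTop.liminf fun n : ℕ => elog2 (hitTime x (cylinder y n)) / (n : ℝ≥0∞)

/-- `- log₂ r`, valued in `ℝ≥0∞` (with `-log₂ 0 = ∞`). -/
def negLog2 (r : ℝ≥0∞) : ℝ≥0∞ :=
  if r = 0 then ⊤ else ENNReal.ofReal (-Real.logb 2 r.toReal)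

/-- Lower local entropy `h̲_μ(y) = liminf -(1/n) log₂ μ(C_n(y))`. -/
def lowerLocalEntropy (μ : Measure Sig) (y : Sig) : ℝ≥0∞ :=
  Filter.atTop.liminf fun n : ℕ => negLog2 (μ (cylinder y n)) / (n : ℝ≥0∞)

/-- Upper local entropy `h̄_μ(y) = limsup -(1/n) log₂ μ(C_n(y))`. -/
def upperLocalEntropy (μ : Measure Sig) (y : Sig) : ℝ≥0∞ :=
  Filter.atTop.limsup fun n : ℕ => negLog2 (μ (cylinder y n)) / (n : ℝ≥0∞)

/-- The local entropy of `μ` at `y` exists and equals `t`. -/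
def HasLocalEntropy (μ : Measure Sig) (y : Sig) (t : ℝ) : Prop :=
  Tendsto (fun n : ℕ => -Real.logb 2 (μ (cylinder y n)).toReal / n) atTop (nhds t)

/-- The entropy spectrum `E(t) = dim_H {y : h_{μ}(y) = t}`. -/
def entropySpectrum (μ : Measure Sig) (t : ℝ) : ℝ≥0∞ :=
  dimH {y : Sig | HasLocalEntropy μ y t}

/-- The circle `ℝ/ℤ`. -/
abbrev Circle1 : Type := AddCircle (1 : ℝ)

/-- The natural projection `π(y) = Σ y_i 2^{-(i+1)}` from `Σ` to the circle. -/
def piProj (y : Sig) : Circle1 :=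
  ((∑' i : ℕ, if y i then ((2 : ℝ) ^ (i + 1))⁻¹ else 0 : ℝ) : Circle1)

/-- The doubling map `T s = 2s (mod 1)`. -/
def doubling (s : Circle1) : Circle1 := s + s

/-- `I^κ(s)`: points `t` with `‖T^n s − t‖ < n^{-κ}` for infinitely many `n`. -/
def Icirc (κ : ℝ) (s : Circle1) : Set Circle1 :=
  {t : Circle1 | ∃ᶠ n : ℕ in atTop, ‖doubling^[n] s - t‖ < (n : ℝ) ^ (-κ)}

/-- `F^κ(s)` is the complement of `I^κ(s)`. -/
def Fcirc (κ : ℝ) (s : Circle1) : Set Circle1 := (Icirc κ s)ᶜ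

/-- `e⁺ = sup ∫(−φ)dν` over invariant probability measures. -/
def ePlus (φ : Sig → ℝ) : ℝ :=
  sSup {e : ℝ | ∃ ν : Measure Sig, IsProbabilityMeasure ν ∧ Measure.map shift ν = ν ∧
    e = ∫ z, (-φ z) ∂ν}

/-- The symbolic set `I^κ(x)`. -/
def Isymb (κ : ℝ) (x : Sig) : Set Sig :=
  {y : Sig | ∃ᶠ n : ℕ in atTop, y ∈ cylinder (shift^[n] x) ⌊κ * Real.logb 2 n⌋₊}

/-- The symbolic set `F^κ(x)`. -/
def Fsymb (κ : ℝ) (x : Sig) : Set Sig := (Isymb κ x)ᶜ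

end

section Aux

theorem shift_iterate (m : ℕ) (x : Sig) : shift^[m] x = fun j => x (j + m) := by
  induction m with
  | zero => simp
  | succ k ih =>
    rw [Function.iterate_succ_apply', ih]
    funext j
    simp only [shift]
    congr 1
    omega

theorem measurable_shift : Measurable shift := by
  apply measurable_pi_lambda
  intro i
  exact measurable_pi_apply (i + 1)

theorem mem_cylinder_iff {y z : Sig} {n : ℕ} :
    y ∈ _root_.cylinder z n ↔ ∀ i < n, y i = z i := Iff.rfl

theorem measurableSet_cylinder (z : Sig) (n : ℕ) : MeasurableSet (_root_.cylinder z n) := by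
  have : _root_.cylinder z n = ⋂ i ∈ Finset.range n, (fun y : Sig => y i) ⁻¹' {z i} := by
    ext y; simp [mem_cylinder_iff]
  rw [this]
  exact MeasurableSet.biInter (Finset.range n).countable_toSet
    (fun i _ => (measurable_pi_apply i) (MeasurableSet.singleton (z i)))

theorem cylinder_eq_of_mem {y z : Sig} {n : ℕ} (h : y ∈ _root_.cylinder z n) :
    _root_.cylinder y n = _root_.cylinder z n := by
  ext w
  constructor <;> intro hw i hi
  · rw [hw i hi, h i hi]
  · rw [hw i hi, ← h i hi]

theorem self_mem_cylinder (z : Sig) (n : ℕ) : z ∈ _root_.cylinder z n := fun _ _ => rfl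

theorem birkhoff_add (φ : Sig → ℝ) (m L : ℕ) (x : Sig) :
    birkhoff φ (m + L) x = birkhoff φ m x + birkhoff φ L (shift^[m] x) := by
  unfold birkhoff
  rw [Finset.sum_range_add]
  congr 1
  apply Finset.sum_congr rfl
  intro i _
  rw [← Function.iterate_add_apply, Nat.add_comm]

end Aux

section Aux2

open scoped Classical

variable {φ : Sig → ℝ} {γ : ℝ} {μ : Measure Sig}

/-- A set determined by the first `L` coordinates. -/
def Determined (L : ℕ) (S : Set Sig) : Prop :=
  ∀ x y : Sig, (∀ i < L, x i = y i) → x ∈ S → y ∈ S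

/-- Extend a finite word to a point of `Sig` by zeros. -/
def extFun (L : ℕ) (w : Fin L → Bool) : Sig :=
  fun i => if h : i < L then w ⟨i, h⟩ else false

theorem mu_iterate_preimage (hinv : Measure.map shift μ = μ) {s : Set Sig}
    (hs : MeasurableSet s) (l : ℕ) : μ (shift^[l] ⁻¹' s) = μ s := by
  induction l with
  | zero => simp
  | succ k ih =>
    have h1 : shift^[k + 1] ⁻¹' s = shift ⁻¹' (shift^[k] ⁻¹' s) := by
      rw [Function.iterate_succ]; rfl
    have h2 : μ (shift ⁻¹' (shift^[k] ⁻¹' s)) = μ (shift^[k] ⁻¹' s) := by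
      conv_rhs => rw [← hinv]
      rw [Measure.map_apply measurable_shift ((measurable_shift.iterate k) hs)]
    rw [h1, h2, ih]

theorem determined_decomp {L : ℕ} {S : Set Sig} (hS : Determined L S) :
    S = ⋃ w ∈ Finset.univ.filter (fun w : Fin L → Bool => extFun L w ∈ S),
      _root_.cylinder (extFun L w) L := by
  ext x
  simp only [Set.mem_iUnion, exists_prop, Finset.mem_filter, Finset.mem_univ, true_and]
  constructor
  · intro hx
    refine ⟨fun i => x i, ?_, ?_⟩
    · exact hS x _ (fun i hi => by simp [extFun, hi]) hx
    · intro i hi; simp [extFun, hi]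
  · rintro ⟨w, hwS, hxw⟩
    exact hS _ x (fun i hi => (hxw i hi).symm) hwS

theorem determined_measure {L : ℕ} {S : Set Sig} (hS : Determined L S) :
    μ S = ∑ w ∈ Finset.univ.filter (fun w : Fin L → Bool => extFun L w ∈ S),
      μ (_root_.cylinder (extFun L w) L) := by
  conv_lhs => rw [determined_decomp hS]
  refine measure_biUnion_finset ?_ (fun w _ => measurableSet_cylinder _ _)
  intro w _ v _ hwv
  refine Set.disjoint_left.2 fun x hxw hxv => hwv ?_
  funext i
  have h1 := hxw i.1 i.2
  have h2 := hxv i.1 i.2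
  rw [h1] at h2
  simpa [extFun, i.2] using h2

theorem pair_bound (hG : IsGibbs φ γ μ) {m L : ℕ} (hm : 1 ≤ m) (hL : 1 ≤ L) (w v : Sig) :
    μ (_root_.cylinder w m ∩ shift^[m] ⁻¹' (_root_.cylinder v L)) ≤
      ENNReal.ofReal (γ ^ 3) * μ (_root_.cylinder w m) * μ (_root_.cylinder v L) := by
  obtain ⟨hγ, hprob, hinv, hgibbs⟩ := hG
  have hγ0 : (0:ℝ) < γ := lt_trans one_pos hγ
  set u : Sig := fun i => if i < m then w i else v (i - m) with hu
  have hset : _root_.cylinder w m ∩ shift^[m] ⁻¹' (_root_.cylinder v L)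
      = _root_.cylinder u (m + L) := by
    ext x
    simp only [Set.mem_inter_iff, Set.mem_preimage, mem_cylinder_iff, shift_iterate]
    constructor
    · rintro ⟨h1, h2⟩ i hi
      by_cases him : i < m
      · simp [hu, him, h1 i him]
      · have : i - m < L := by omega
        have := h2 (i - m) this
        simp only [hu]
        rw [if_neg him]
        rw [← this]
        congr 1
        omega
    · intro h
      constructor
      · intro i hi
        have := h i (by omega)
        simpa [hu, hi] using this
      · intro j hj
        have := h (j + m) (by omega)
        simp only [hu, if_neg (by omega : ¬ j + m < m)] at this
        simpa using this
  have hum : _root_.cylinder u m = _root_.cylinder w m :=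
    cylinder_eq_of_mem (fun i hi => by simp [hu, hi])
  have huL : _root_.cylinder (shift^[m] u) L = _root_.cylinder v L := by
    refine cylinder_eq_of_mem (fun j hj => ?_)
    rw [shift_iterate]
    simp only [hu, if_neg (by omega : ¬ j + m < m)]
    congr 1
    omega
  have h1 := (hgibbs u (m + L) (by omega)).2
  have h2 := (hgibbs u m hm).1
  have h3 := (hgibbs (shift^[m] u) L hL).1
  rw [hum] at h2
  rw [huL] at h3
  rw [birkhoff_add φ m L u] at h1
  rw [hset]
  set B1 := birkhoff φ m u
  set B2 := birkhoff φ L (shift^[m] u)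
  have hkey : γ * (2:ℝ) ^ (B1 + B2) = γ ^ 3 * (γ⁻¹ * 2 ^ B1) * (γ⁻¹ * 2 ^ B2) := by
    rw [Real.rpow_add two_pos]
    field_simp
  calc μ (_root_.cylinder u (m + L)) ≤ ENNReal.ofReal (γ * 2 ^ (B1 + B2)) := h1
    _ = ENNReal.ofReal (γ ^ 3) * ENNReal.ofReal (γ⁻¹ * 2 ^ B1)
        * ENNReal.ofReal (γ⁻¹ * 2 ^ B2) := by
        rw [hkey, ENNReal.ofReal_mul (by positivity), ENNReal.ofReal_mul (by positivity)]
    _ ≤ ENNReal.ofReal (γ ^ 3) * μ (_root_.cylinder w m) * μ (_root_.cylinder v L) :=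
        mul_le_mul' (mul_le_mul' le_rfl h2) h3

theorem block_bound (hG : IsGibbs φ γ μ) {nn m L : ℕ} (hnn : 1 ≤ nn) (hL : 1 ≤ L)
    (hm : nn ≤ m) (z : Sig) {B : Set Sig} (hB : Determined L B) :
    μ (_root_.cylinder z nn ∩ shift^[m] ⁻¹' B) ≤
      ENNReal.ofReal (γ ^ 3) * μ (_root_.cylinder z nn) * μ B := by
  have hcylD : Determined m (_root_.cylinder z nn) := by
    intro x y hxy hx i hi
    rw [← hxy i (lt_of_lt_of_le hi hm)]
    exact hx i hi
  set W := Finset.univ.filter (fun w : Fin m → Bool => extFun m w ∈ _root_.cylinder z nn)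
  set V := Finset.univ.filter (fun v : Fin L → Bool => extFun L v ∈ B)
  have hWm : μ (_root_.cylinder z nn) = ∑ w ∈ W, μ (_root_.cylinder (extFun m w) m) :=
    determined_measure hcylD
  have hVm : μ B = ∑ v ∈ V, μ (_root_.cylinder (extFun L v) L) :=
    determined_measure hB
  have hsubset : _root_.cylinder z nn ∩ shift^[m] ⁻¹' B ⊆
      ⋃ w ∈ W, ⋃ v ∈ V, (_root_.cylinder (extFun m w) m ∩
        shift^[m] ⁻¹' (_root_.cylinder (extFun L v) L)) := by
    intro x hx
    rw [determined_decomp hcylD] at hx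
    obtain ⟨hx1, hx2⟩ := hx
    rw [Set.mem_preimage, determined_decomp hB] at hx2
    simp only [Set.mem_iUnion, exists_prop] at hx1 hx2 ⊢
    obtain ⟨w, hwW, hxw⟩ := hx1
    obtain ⟨v, hvV, hxv⟩ := hx2
    exact ⟨w, hwW, v, hvV, hxw, hxv⟩
  calc μ (_root_.cylinder z nn ∩ shift^[m] ⁻¹' B)
      ≤ ∑ w ∈ W, ∑ v ∈ V, μ (_root_.cylinder (extFun m w) m ∩
          shift^[m] ⁻¹' (_root_.cylinder (extFun L v) L)) := by
        refine le_trans (measure_mono hsubset) ?_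
        refine le_trans (measure_biUnion_finset_le _ _) ?_
        exact Finset.sum_le_sum fun w _ => measure_biUnion_finset_le _ _
    _ ≤ ∑ w ∈ W, ∑ v ∈ V, ENNReal.ofReal (γ ^ 3) * μ (_root_.cylinder (extFun m w) m)
          * μ (_root_.cylinder (extFun L v) L) := by
        refine Finset.sum_le_sum fun w _ => Finset.sum_le_sum fun v _ => ?_
        exact pair_bound ⟨hG.1, hG.2.1, hG.2.2.1, hG.2.2.2⟩ (le_trans hnn hm) hL _ _
    _ = ENNReal.ofReal (γ ^ 3) * μ (_root_.cylinder z nn) * μ B := by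
        rw [hWm, hVm]
        simp only [Finset.mul_sum, Finset.sum_mul, mul_assoc]
        rw [Finset.sum_comm]

end Aux2

section Aux3

open scoped Classical

variable {φ : Sig → ℝ} {γ : ℝ} {μ : Measure Sig}

theorem measurableSet_interShift {n : ℕ} (q : Finset (ℕ × Set Sig))
    (hcyl : ∀ p ∈ q, ∃ z : Sig, p.2 = _root_.cylinder z n) :
    MeasurableSet (⋂ p ∈ q, shift^[p.1] ⁻¹' p.2) := by
  refine MeasurableSet.biInter q.countable_toSet fun p hp => ?_
  obtain ⟨z, hz⟩ := hcyl p hp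
  rw [hz]
  exact (measurable_shift.iterate p.1) (measurableSet_cylinder z n)

theorem determined_interShift {n : ℕ} (hn : 1 ≤ n) (q : Finset (ℕ × Set Sig))
    (hcyl : ∀ p ∈ q, ∃ z : Sig, p.2 = _root_.cylinder z n) :
    Determined (q.sup Prod.fst + n) (⋂ p ∈ q, shift^[p.1] ⁻¹' p.2) := by
  intro x y hxy hx
  simp only [Set.mem_iInter, Set.mem_preimage] at hx ⊢
  intro p hp
  obtain ⟨z, hz⟩ := hcyl p hp
  have hx' := hx p hp
  rw [hz] at hx' ⊢
  intro i hi
  have hle : p.1 ≤ q.sup Prod.fst := Finset.le_sup hp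
  have h2 := hx' i hi
  simp only [shift_iterate] at h2 ⊢
  rw [← hxy (i + p.1) (by omega)]
  exact h2

theorem interShift_bound (hG : IsGibbs φ γ μ) {n : ℕ} (hn : 1 ≤ n) (p0e : ℝ≥0∞)
    (q : Finset (ℕ × Set Sig))
    (hcyl : ∀ p ∈ q, ∃ z : Sig, p.2 = _root_.cylinder z n)
    (hmu : ∀ p ∈ q, μ p.2 ≤ p0e)
    (hgap : ∀ p ∈ q, ∀ p' ∈ q, p ≠ p' → p.1 + n ≤ p'.1 ∨ p'.1 + n ≤ p.1) :
    μ (⋂ p ∈ q, shift^[p.1] ⁻¹' p.2) ≤ (ENNReal.ofReal (γ ^ 3) * p0e) ^ q.card := by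
  have hprob : IsProbabilityMeasure μ := hG.2.1
  have hinv := hG.2.2.1
  have hγ1 : (1:ℝ≥0∞) ≤ ENNReal.ofReal (γ ^ 3) := by
    rw [ENNReal.one_le_ofReal]
    have h1γ : (1:ℝ) ≤ γ := le_of_lt hG.1
    exact one_le_pow₀ h1γ
  obtain ⟨k, hk⟩ : ∃ k, q.card = k := ⟨q.card, rfl⟩
  induction k generalizing q with
  | zero =>
    rw [Finset.card_eq_zero] at hk
    subst hk
    simp
  | succ k IH =>
    have hne : q.Nonempty := Finset.card_pos.mp (by omega)
    obtain ⟨p₁, hp₁, hmin⟩ := Finset.exists_min_image q Prod.fst hne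
    obtain ⟨z₁, hz₁⟩ := hcyl p₁ hp₁
    set q' := q.erase p₁ with hq'
    have hq'card : q'.card = k := by
      rw [hq', Finset.card_erase_of_mem hp₁, hk]
      omega
    -- split the intersection
    have hq_ins : q = insert p₁ q' := (Finset.insert_erase hp₁).symm
    rcases Finset.eq_empty_or_nonempty q' with hq'e | hq'ne
    · -- singleton case
      have : q = {p₁} := by rw [hq_ins, hq'e]; rfl
      rw [this]
      simp only [Finset.set_biInter_singleton, Finset.card_singleton, pow_one]
      rw [mu_iterate_preimage hinv (by rw [hz₁]; exact measurableSet_cylinder _ _) p₁.1]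
      calc μ p₁.2 ≤ p0e := hmu p₁ hp₁
        _ = 1 * p0e := (one_mul _).symm
        _ ≤ ENNReal.ofReal (γ ^ 3) * p0e := mul_le_mul_left hγ1 _
    · obtain ⟨p₂, hp₂, hmin₂⟩ := Finset.exists_min_image q' Prod.fst hq'ne
      have hp₂q : p₂ ∈ q := Finset.mem_of_mem_erase hp₂
      have hp₂ne : p₂ ≠ p₁ := Finset.ne_of_mem_erase hp₂
      have hgap₁₂ : p₁.1 + n ≤ p₂.1 := by
        rcases hgap p₂ hp₂q p₁ hp₁ hp₂ne with h | h
        · have := hmin p₂ hp₂q; omega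
        · exact h
      set d := p₂.1 with hd
      have hdle : ∀ p ∈ q', d ≤ p.1 := fun p hp => hmin₂ p hp
      set m := d - p₁.1 with hm
      have hmn : n ≤ m := by omega
      set q'' := q'.image (fun p : ℕ × Set Sig => (p.1 - d, p.2)) with hq''
      have hinj : Set.InjOn (fun p : ℕ × Set Sig => (p.1 - d, p.2)) q' := by
        intro p hp p' hp' heq
        by_contra hne'
        have hg : p.1 + n ≤ p'.1 ∨ p'.1 + n ≤ p.1 :=
          hgap p (Finset.mem_of_mem_erase hp) p' (Finset.mem_of_mem_erase hp') hne'
        have h1 : p.1 - d = p'.1 - d := congrArg Prod.fst heq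
        have h2 := hdle p hp
        have h3 := hdle p' hp'
        omega
      have hq''card : q''.card = k := by
        rw [hq'', Finset.card_image_of_injOn hinj, hq'card]
      have hcyl'' : ∀ p ∈ q'', ∃ z : Sig, p.2 = _root_.cylinder z n := by
        intro p hp
        rw [hq'', Finset.mem_image] at hp
        obtain ⟨p', hp', rfl⟩ := hp
        exact hcyl p' (Finset.mem_of_mem_erase hp')
      have hmu'' : ∀ p ∈ q'', μ p.2 ≤ p0e := by
        intro p hp
        rw [hq'', Finset.mem_image] at hp
        obtain ⟨p', hp', rfl⟩ := hp
        exact hmu p' (Finset.mem_of_mem_erase hp')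
      have hgap'' : ∀ p ∈ q'', ∀ p' ∈ q'', p ≠ p' → p.1 + n ≤ p'.1 ∨ p'.1 + n ≤ p.1 := by
        intro p hp p' hp' hne'
        rw [hq'', Finset.mem_image] at hp hp'
        obtain ⟨s, hs, rfl⟩ := hp
        obtain ⟨s', hs', rfl⟩ := hp'
        have hss' : s ≠ s' := by rintro rfl; exact hne' rfl
        have hg := hgap s (Finset.mem_of_mem_erase hs) s' (Finset.mem_of_mem_erase hs') hss'
        have h2 := hdle s hs
        have h3 := hdle s' hs'
        simp only
        omega
      set A'' := ⋂ p ∈ q'', shift^[p.1] ⁻¹' p.2 with hA''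
      have hIH : μ A'' ≤ (ENNReal.ofReal (γ ^ 3) * p0e) ^ k := by
        have := IH q'' hcyl'' hmu'' hgap'' hq''card
        rwa [hq''card] at this
      -- set equality
      have hsplit : (⋂ p ∈ q, shift^[p.1] ⁻¹' p.2) =
          shift^[p₁.1] ⁻¹' (p₁.2 ∩ shift^[m] ⁻¹' A'') := by
        rw [hq_ins, Finset.set_biInter_insert]
        ext x
        simp only [Set.mem_inter_iff, Set.mem_preimage, hA'', Set.mem_iInter]
        constructor
        · rintro ⟨h1, h2⟩
          refine ⟨h1, ?_⟩
          intro p hp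
          rw [hq'', Finset.mem_image] at hp
          obtain ⟨s, hs, rfl⟩ := hp
          simp only
          rw [← Function.iterate_add_apply, ← Function.iterate_add_apply]
          have hds := hdle s hs
          have heq : s.1 - d + m + p₁.1 = s.1 := by omega
          rw [heq]
          exact h2 s hs
        · rintro ⟨h1, h2⟩
          refine ⟨h1, ?_⟩
          intro s hs
          have hmem : (s.1 - d, s.2) ∈ q'' := by
            rw [hq'', Finset.mem_image]; exact ⟨s, hs, rfl⟩
          have h3 := h2 _ hmem
          simp only at h3
          rw [← Function.iterate_add_apply, ← Function.iterate_add_apply] at h3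
          have hds := hdle s hs
          have heq : s.1 - d + m + p₁.1 = s.1 := by omega
          rwa [heq] at h3
      have hA''meas : MeasurableSet A'' := measurableSet_interShift q'' hcyl''
      have hdet : Determined (q''.sup Prod.fst + n) A'' := determined_interShift hn q'' hcyl''
      have hmeas2 : MeasurableSet (p₁.2 ∩ shift^[m] ⁻¹' A'') := by
        refine MeasurableSet.inter ?_ ((measurable_shift.iterate m) hA''meas)
        rw [hz₁]; exact measurableSet_cylinder _ _
      rw [hsplit, mu_iterate_preimage hinv hmeas2]
      have hblock : μ (p₁.2 ∩ shift^[m] ⁻¹' A'') ≤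
          ENNReal.ofReal (γ ^ 3) * μ p₁.2 * μ A'' := by
        rw [hz₁]
        exact block_bound hG hn (by omega) hmn z₁ hdet
      calc μ (p₁.2 ∩ shift^[m] ⁻¹' A'') ≤ ENNReal.ofReal (γ ^ 3) * μ p₁.2 * μ A'' := hblock
        _ ≤ ENNReal.ofReal (γ ^ 3) * p0e * (ENNReal.ofReal (γ ^ 3) * p0e) ^ k :=
            mul_le_mul' (mul_le_mul' le_rfl (hmu p₁ hp₁)) hIH
        _ = (ENNReal.ofReal (γ ^ 3) * p0e) ^ q.card := by rw [hk, pow_succ]; ring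

end Aux3

section Aux4

theorem mod_gap {n l l' : ℕ} (hn : 0 < n) (h : l % n = l' % n) (hll : l < l') :
    l + n ≤ l' := by
  have h1 := Nat.div_add_mod l n
  have h2 := Nat.div_add_mod l' n
  have h3 : l / n < l' / n := by
    rcases Nat.lt_or_ge (l / n) (l' / n) with h' | h'
    · exact h'
    · exfalso; have := Nat.mul_le_mul_left n h'; omega
  have h4 : n * (l / n + 1) ≤ n * (l' / n) := Nat.mul_le_mul_left n h3
  rw [Nat.mul_add, Nat.mul_one] at h4
  omega

theorem hit_extract {x : Sig} {C : Set Sig} {R : ℝ} (hR : 0 ≤ R)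
    (h : (hitTime x C : ℝ≥0∞) ≤ ENNReal.ofReal R) :
    ∃ l : ℕ, 1 ≤ l ∧ (l : ℝ) ≤ R ∧ shift^[l] x ∈ C := by
  by_contra hcon
  push_neg at hcon
  set T := ⌊R⌋₊ with hT
  have hlow : ((T + 1 : ℕ) : ℕ∞) ≤ hitTime x C := by
    apply le_sInf
    rintro m ⟨l, rfl, hl1, hlC⟩
    have hRl : R < (l : ℝ) := by
      by_contra hc
      push_neg at hc
      exact hcon l hl1 hc hlC
    have hTl : T + 1 ≤ l := by
      have hfl : (T : ℝ) ≤ R := Nat.floor_le hR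
      have : (T : ℝ) < (l : ℝ) := lt_of_le_of_lt hfl hRl
      exact_mod_cast this
    exact_mod_cast hTl
  have hlow2 : (((T + 1 : ℕ) : ℕ∞) : ℝ≥0∞) ≤ ENNReal.ofReal R := by
    refine le_trans ?_ h
    exact_mod_cast hlow
  rw [ENat.toENNReal_coe] at hlow2
  rw [← ENNReal.ofReal_natCast, ENNReal.ofReal_le_ofReal_iff hR] at hlow2
  have := Nat.lt_floor_add_one R
  push_cast at hlow2
  rw [← hT] at this
  linarith

end Aux4

set_option maxHeartbeats 1000000 in
/-- Small hitting probability: outside a set of exponentially small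
measure, at most `2^{cn}` of the given small cylinders are hit before time `2^{an}`. -/
theorem statement15 (φ : Sig → ℝ) (γ : ℝ) (μ : Measure Sig)
    (hφ : IsHolder φ) (hG : IsGibbs φ γ μ)
    (a b c g lam : ℝ) (ha : 0 < a) (hb : 0 < b) (hc : 0 < c)
    (hgb : max (b - c) 0 < g) (hlam : 0 < lam) :
    ∃ N : ℕ, ∀ n : ℕ, N ≤ n → ∀ 𝒞 : Finset (Set Sig),
      (∀ C ∈ 𝒞, ∃ z : Sig, C = cylinder z n) →
      ((𝒞.card : ℝ) ≤ (2 : ℝ) ^ (b * (n : ℝ))) →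
      (∀ C ∈ 𝒞, μ C ≤ ENNReal.ofReal ((2 : ℝ) ^ (-(a + g) * (n : ℝ)))) →
      μ {x : Sig | (2 : ℝ) ^ (c * (n : ℝ)) ≤
          ({C : Set Sig | C ∈ 𝒞 ∧
            (hitTime x C : ℝ≥0∞) ≤ ENNReal.ofReal ((2 : ℝ) ^ (a * (n : ℝ)))}.ncard : ℝ)}
        ≤ ENNReal.ofReal ((2 : ℝ) ^ (-lam * (n : ℝ))) := by
  classical
  have hγ1 : (1:ℝ) < γ := hG.1
  have hγ0 : (0:ℝ) < γ := lt_trans one_pos hγ1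
  have hγ3 : (0:ℝ) < γ ^ 3 := by positivity
  have hprob : IsProbabilityMeasure μ := hG.2.1
  set δ := g + c - b with hδdef
  have hδ : 0 < δ := by
    have h1 : b - c < g := lt_of_le_of_lt (le_max_left _ _) hgb
    simp only [hδdef]; linarith
  set M := ⌈lam / δ⌉₊ + 1 with hMdef
  have hM1 : 1 ≤ M := Nat.le_add_left 1 _
  have hM0 : (0:ℝ) < M := by positivity
  have hlamM : lam + δ ≤ δ * M := by
    have h1 : lam / δ ≤ (⌈lam / δ⌉₊ : ℝ) := Nat.le_ceil _
    have h2 : lam ≤ δ * (⌈lam / δ⌉₊ : ℝ) := by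
      rw [div_le_iff₀ hδ] at h1; linarith [h1]
    have h3 : ((M : ℕ) : ℝ) = (⌈lam / δ⌉₊ : ℝ) + 1 := by rw [hMdef]; push_cast; ring
    rw [h3, mul_add, mul_one]
    linarith
  have hr2 : (1:ℝ) < (2:ℝ) ^ c := by
    rw [show (1:ℝ) = (2:ℝ) ^ (0:ℝ) by simp]
    exact Real.rpow_lt_rpow_left_iff (by norm_num) |>.2 hc
  have hrδ : (1:ℝ) < (2:ℝ) ^ δ := by
    rw [show (1:ℝ) = (2:ℝ) ^ (0:ℝ) by simp]
    exact Real.rpow_lt_rpow_left_iff (by norm_num) |>.2 hδ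
  have hE2 : ∀ᶠ n : ℕ in atTop, (4 * M + 4 : ℝ) * n ≤ ((2:ℝ) ^ c) ^ n := by
    have ht := tendsto_pow_const_div_const_pow_of_one_lt 1 hr2
    have hev := ht.eventually_lt_const (show (0:ℝ) < 1 / (4 * M + 4) by positivity)
    filter_upwards [hev] with n hn
    have hpow : (0:ℝ) < ((2:ℝ) ^ c) ^ n := by positivity
    rw [div_lt_iff₀ hpow] at hn
    have : ((n:ℝ) ^ 1) = (n:ℝ) := by ring
    rw [this] at hn
    rw [div_mul_eq_mul_div, lt_div_iff₀ (by positivity : (0:ℝ) < 4 * M + 4)] at hn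
    linarith
  have hE3 : ∀ᶠ n : ℕ in atTop,
      (γ ^ 3) ^ M * (Nat.factorial M : ℝ) * 4 ^ M * (n:ℝ) ^ M ≤ ((2:ℝ) ^ δ) ^ n := by
    have ht := tendsto_pow_const_div_const_pow_of_one_lt M hrδ
    have hc0 : (0:ℝ) < (γ ^ 3) ^ M * (Nat.factorial M : ℝ) * 4 ^ M := by positivity
    have hev := ht.eventually_lt_const (show (0:ℝ) < 1 / ((γ ^ 3) ^ M * (Nat.factorial M : ℝ) * 4 ^ M) by positivity)
    filter_upwards [hev] with n hn
    have hpow : (0:ℝ) < ((2:ℝ) ^ δ) ^ n := by positivity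
    rw [div_lt_iff₀ hpow, div_mul_eq_mul_div, lt_div_iff₀ hc0] at hn
    nlinarith [hn]
  obtain ⟨N0, hN0⟩ := Filter.eventually_atTop.1 ((hE2.and hE3).and (Filter.eventually_ge_atTop 1))
  refine ⟨N0, fun n hn 𝒞 h𝒞cyl h𝒞card h𝒞mu => ?_⟩
  obtain ⟨⟨hA2, hA3⟩, hn1⟩ := hN0 n hn
  have hn0 : 0 < n := hn1
  have hnR : (0:ℝ) < n := by exact_mod_cast hn0
  -- rpow to pow conversions
  have h2cn : (2:ℝ) ^ (c * (n:ℝ)) = ((2:ℝ) ^ c) ^ n := by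
    rw [Real.rpow_mul (by norm_num : (0:ℝ) ≤ 2), Real.rpow_natCast]
  have h2δn : (2:ℝ) ^ (δ * (n:ℝ)) = ((2:ℝ) ^ δ) ^ n := by
    rw [Real.rpow_mul (by norm_num : (0:ℝ) ≤ 2), Real.rpow_natCast]
  set R := (2:ℝ) ^ (a * (n:ℝ)) with hRdef
  have hR0 : (0:ℝ) ≤ R := le_of_lt (Real.rpow_pos_of_pos (by norm_num) _)
  set T := ⌊R⌋₊ with hTdef
  set p0 := (2:ℝ) ^ (-(a + g) * (n:ℝ)) with hp0def
  have hp00 : (0:ℝ) < p0 := Real.rpow_pos_of_pos (by norm_num) _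
  set p0e := ENNReal.ofReal p0 with hp0edef
  set Γ := ENNReal.ofReal (γ ^ 3) with hΓdef
  set K := ⌈(2:ℝ) ^ (c * (n:ℝ))⌉₊ with hKdef
  set K2 := K / n with hK2def
  set B := K2.choose M with hBdef
  set X := (2:ℝ) ^ (c * (n:ℝ)) / n with hXdef
  have hX4 : (4 * (M:ℝ) + 4) ≤ X := by
    rw [hXdef, le_div_iff₀ hnR, h2cn]
    exact hA2
  have hXpos : (0:ℝ) < X := by
    rw [hXdef]
    positivity
  have hK2X : X ≤ (K2:ℝ) + 1 := by
    have hKc : (2:ℝ) ^ (c * (n:ℝ)) ≤ K := Nat.le_ceil _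
    have hmod := Nat.div_add_mod K n
    have hmodlt : K % n < n := Nat.mod_lt _ hn0
    have hKn : K < n * (K2 + 1) := by
      calc K = n * K2 + K % n := (Nat.div_add_mod K n).symm
        _ < n * K2 + n := Nat.add_lt_add_left hmodlt _
        _ = n * (K2 + 1) := (Nat.mul_succ n K2).symm
    have hKnR : (K:ℝ) < n * ((K2:ℝ) + 1) := by exact_mod_cast hKn
    rw [hXdef, div_le_iff₀ hnR]
    nlinarith
  have hMK2 : M ≤ K2 := by
    have : (M:ℝ) ≤ (K2:ℝ) := by linarith
    exact_mod_cast this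
  have hW1 : X / 4 ≤ ((K2 + 1 - M : ℕ) : ℝ) := by
    have hcast : ((K2 + 1 - M : ℕ) : ℝ) = (K2:ℝ) + 1 - M := by
      have : M ≤ K2 + 1 := le_trans hMK2 (Nat.le_succ _)
      push_cast [this]
      ring
    rw [hcast]
    linarith
  -- the combinatorial family
  set P : Finset (Finset (ℕ × Set Sig)) := ((Finset.Icc 1 T ×ˢ 𝒞).powersetCard M).filter
      (fun q => ∀ p ∈ q, ∀ p' ∈ q, p ≠ p' → p.1 + n ≤ p'.1 ∨ p'.1 + n ≤ p.1) with hPdef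
  set A : Finset (ℕ × Set Sig) → Set Sig := fun q => ⋂ p ∈ q, shift^[p.1] ⁻¹' p.2 with hAdef
  have hPsub : ∀ q ∈ P, q ⊆ Finset.Icc 1 T ×ˢ 𝒞 :=
    fun q hq => (Finset.mem_powersetCard.1 (Finset.mem_filter.1 hq).1).1
  have hPcardM : ∀ q ∈ P, q.card = M :=
    fun q hq => (Finset.mem_powersetCard.1 (Finset.mem_filter.1 hq).1).2
  have hPcyl : ∀ q ∈ P, ∀ p ∈ q, ∃ z : Sig, p.2 = _root_.cylinder z n := by
    intro q hq p hp
    exact h𝒞cyl p.2 (Finset.mem_product.1 (hPsub q hq hp)).2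
  have hAmeas : ∀ q ∈ P, MeasurableSet (A q) :=
    fun q hq => measurableSet_interShift q (hPcyl q hq)
  set F := ⋃ Q ∈ P.powersetCard B, ⋂ q ∈ Q, A q with hFdef
  have hFmeas : MeasurableSet F := by
    refine MeasurableSet.biUnion (P.powersetCard B).countable_toSet fun Q hQ => ?_
    refine MeasurableSet.biInter Q.countable_toSet fun q hq => ?_
    exact hAmeas q ((Finset.mem_powersetCard.1 hQ).1 hq)
  -- Step 1 : E ⊆ F
  have hEF : {x : Sig | (2:ℝ) ^ (c * (n:ℝ)) ≤
      (({C : Set Sig | C ∈ 𝒞 ∧ (hitTime x C : ℝ≥0∞) ≤ ENNReal.ofReal R}).ncard : ℝ)} ⊆ F := by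
    intro x hx
    simp only [Set.mem_setOf_eq] at hx
    set hits := {C : Set Sig | C ∈ 𝒞 ∧ (hitTime x C : ℝ≥0∞) ≤ ENNReal.ofReal R} with hhitsdef
    have hhitsfin : hits.Finite := Set.Finite.subset 𝒞.finite_toSet (fun C hC => hC.1)
    have hKhits : K ≤ hits.ncard := Nat.ceil_le.2 hx
    set H := (Finset.Icc 1 T).filter (fun l => _root_.cylinder (shift^[l] x) n ∈ 𝒞) with hHdef
    have hwit : ∀ C : Set Sig, ∃ l : ℕ, C ∈ hits → (l ∈ H ∧ shift^[l] x ∈ C) := by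
      intro C
      by_cases hC : C ∈ hits
      · obtain ⟨l, hl1, hlR, hlC⟩ := hit_extract hR0 hC.2
        refine ⟨l, fun _ => ⟨?_, hlC⟩⟩
        rw [hHdef, Finset.mem_filter, Finset.mem_Icc]
        obtain ⟨z, hz⟩ := h𝒞cyl C hC.1
        have hCeq : _root_.cylinder (shift^[l] x) n = C := by
          rw [hz]
          exact cylinder_eq_of_mem (by rw [hz] at hlC; exact hlC)
        exact ⟨⟨hl1, Nat.le_floor hlR⟩, hCeq ▸ hC.1⟩
      · exact ⟨0, fun h => absurd h hC⟩
    choose f hf using hwit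
    have hKH : K ≤ H.card := by
      refine le_trans hKhits ?_
      rw [Set.ncard_eq_toFinset_card hits hhitsfin]
      refine Finset.card_le_card_of_injOn f (fun C hC => (hf C (hhitsfin.mem_toFinset.1 hC)).1) ?_
      intro C hC C' hC' hff
      replace hC := hhitsfin.mem_toFinset.1 hC
      replace hC' := hhitsfin.mem_toFinset.1 hC'
      have h1 := (hf C hC).2
      have h2 := (hf C' hC').2
      rw [hff] at h1
      obtain ⟨z, hz⟩ := h𝒞cyl C hC.1
      obtain ⟨z', hz'⟩ := h𝒞cyl C' hC'.1
      have e1 : _root_.cylinder (shift^[f C'] x) n = C := by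
        rw [hz]; exact cylinder_eq_of_mem (hz ▸ h1)
      have e2 : _root_.cylinder (shift^[f C'] x) n = C' := by
        rw [hz']; exact cylinder_eq_of_mem (hz' ▸ h2)
      rw [← e1]
      exact e2
    have hsum : ∑ r ∈ Finset.range n, ((H.filter (fun l => l % n = r)).card) = H.card :=
      (Finset.card_eq_sum_card_fiberwise (fun l _ => Finset.mem_range.2 (Nat.mod_lt l hn0))).symm
    have hex : ∃ r ∈ Finset.range n, H.card ≤ n * (H.filter (fun l => l % n = r)).card := by
      refine Finset.exists_le_of_sum_le ⟨0, Finset.mem_range.2 hn0⟩ ?_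
      rw [← Finset.mul_sum, hsum, Finset.sum_const, Finset.card_range, smul_eq_mul]
    obtain ⟨r, _, hle⟩ := hex
    set H' := H.filter (fun l => l % n = r) with hH'def
    have hK2H' : K2 ≤ H'.card := by
      have h1 : K ≤ n * H'.card := le_trans hKH hle
      calc K2 = K / n := rfl
        _ ≤ (n * H'.card) / n := Nat.div_le_div_right h1
        _ = H'.card := Nat.mul_div_cancel_left _ hn0
    set Φ : Finset ℕ → Finset (ℕ × Set Sig) :=
      fun t => t.image (fun l => (l, _root_.cylinder (shift^[l] x) n)) with hΦdef
    have hΦP : ∀ t ∈ H'.powersetCard M, Φ t ∈ P.filter (fun q => x ∈ A q) := by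
      intro t ht
      obtain ⟨htsub, htcard⟩ := Finset.mem_powersetCard.1 ht
      have htH : ∀ l ∈ t, l ∈ H := fun l hl => Finset.mem_of_mem_filter l (htsub hl)
      refine Finset.mem_filter.2 ⟨Finset.mem_filter.2 ⟨Finset.mem_powersetCard.2 ⟨?_, ?_⟩, ?_⟩, ?_⟩
      · -- Φ t ⊆ Icc 1 T ×ˢ 𝒞
        intro p hp
        rw [hΦdef, Finset.mem_image] at hp
        obtain ⟨l, hl, rfl⟩ := hp
        refine Finset.mem_product.2 ⟨?_, ?_⟩
        · exact Finset.mem_of_mem_filter l (htH l hl)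
        · exact (Finset.mem_filter.1 (htH l hl)).2
      · -- card
        rw [hΦdef, Finset.card_image_of_injective _ (fun l l' h => congrArg Prod.fst h), htcard]
      · -- gaps
        intro p hp p' hp' hne
        rw [hΦdef, Finset.mem_image] at hp hp'
        obtain ⟨l, hl, rfl⟩ := hp
        obtain ⟨l', hl', rfl⟩ := hp'
        have hll' : l ≠ l' := fun h => hne (by rw [h])
        have hm1 : l % n = r := (Finset.mem_filter.1 (htsub hl)).2
        have hm2 : l' % n = r := (Finset.mem_filter.1 (htsub hl')).2
        rcases Nat.lt_or_ge l l' with h | h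
        · exact Or.inl (mod_gap hn0 (hm1.trans hm2.symm) h)
        · have : l' < l := lt_of_le_of_ne h (Ne.symm hll')
          exact Or.inr (mod_gap hn0 (hm2.trans hm1.symm) this)
      · -- x ∈ A (Φ t)
        rw [hAdef]
        simp only [Set.mem_iInter, Set.mem_preimage]
        intro p hp
        rw [hΦdef, Finset.mem_image] at hp
        obtain ⟨l, hl, rfl⟩ := hp
        exact self_mem_cylinder _ _
    have hΦinj : Set.InjOn Φ (H'.powersetCard M : Set (Finset ℕ)) := by
      intro t ht t' ht' htt
      have h1 : (Φ t).image Prod.fst = t := by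
        rw [hΦdef, Finset.image_image]
        simp [Function.comp_def]
      have h2 : (Φ t').image Prod.fst = t' := by
        rw [hΦdef, Finset.image_image]
        simp [Function.comp_def]
      rw [← h1, ← h2, htt]
    have hBcount : B ≤ (P.filter (fun q => x ∈ A q)).card := by
      calc B = K2.choose M := rfl
        _ ≤ H'.card.choose M := Nat.choose_le_choose M hK2H'
        _ = (H'.powersetCard M).card := (Finset.card_powersetCard M H').symm
        _ ≤ (P.filter (fun q => x ∈ A q)).card :=
            Finset.card_le_card_of_injOn Φ hΦP hΦinj
    obtain ⟨Q, hQsub, hQcard⟩ := Finset.exists_subset_card_eq hBcount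
    have hQP : Q ∈ P.powersetCard B := Finset.mem_powersetCard.2
      ⟨hQsub.trans (Finset.filter_subset _ _), hQcard⟩
    rw [hFdef]
    refine Set.mem_iUnion₂.2 ⟨Q, hQP, ?_⟩
    refine Set.mem_iInter₂.2 fun q hq => ?_
    exact (Finset.mem_filter.1 (hQsub hq)).2
  -- Step 2 : counting inequality
  have hBF : (B : ℝ≥0∞) * μ F ≤ ∑ q ∈ P, μ (A q) := by
    have hpt : ∀ x : Sig, F.indicator (fun _ => (B:ℝ≥0∞)) x
        ≤ ∑ q ∈ P, (A q).indicator (fun _ => (1:ℝ≥0∞)) x := by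
      intro x
      by_cases hxF : x ∈ F
      · rw [Set.indicator_of_mem hxF]
        obtain ⟨Q, hQ, hxQ⟩ := Set.mem_iUnion₂.1 hxF
        obtain ⟨hQP, hQB⟩ := Finset.mem_powersetCard.1 hQ
        have hxq : ∀ q ∈ Q, x ∈ A q := fun q hq => Set.mem_iInter₂.1 hxQ q hq
        calc (B:ℝ≥0∞) = ∑ _q ∈ Q, (1:ℝ≥0∞) := by rw [Finset.sum_const, hQB, nsmul_eq_mul, mul_one]
          _ = ∑ q ∈ Q, (A q).indicator (fun _ => (1:ℝ≥0∞)) x := by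
              refine Finset.sum_congr rfl fun q hq => ?_
              rw [Set.indicator_of_mem (hxq q hq)]
          _ ≤ ∑ q ∈ P, (A q).indicator (fun _ => (1:ℝ≥0∞)) x :=
              Finset.sum_le_sum_of_subset hQP
      · rw [Set.indicator_of_notMem hxF]
        exact zero_le
    calc (B:ℝ≥0∞) * μ F = ∫⁻ x, F.indicator (fun _ => (B:ℝ≥0∞)) x ∂μ :=
          (lintegral_indicator_const hFmeas _).symm
      _ ≤ ∫⁻ x, ∑ q ∈ P, (A q).indicator (fun _ => (1:ℝ≥0∞)) x ∂μ := lintegral_mono hpt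
      _ = ∑ q ∈ P, ∫⁻ x, (A q).indicator (fun _ => (1:ℝ≥0∞)) x ∂μ :=
          lintegral_finset_sum _ (fun q hq => measurable_const.indicator (hAmeas q hq))
      _ = ∑ q ∈ P, μ (A q) := Finset.sum_congr rfl fun q hq => by
          rw [lintegral_indicator_const (hAmeas q hq), one_mul]
  -- Step 3 : per-element measure bound
  have hcount : ∀ q ∈ P, μ (A q) ≤ (Γ * p0e) ^ M := by
    intro q hq
    have := interShift_bound hG hn1 p0e q (hPcyl q hq)
      (fun p hp => h𝒞mu p.2 (Finset.mem_product.1 (hPsub q hq hp)).2)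
      (Finset.mem_filter.1 hq).2
    rw [hPcardM q hq] at this
    exact this
  have hsumP : ∑ q ∈ P, μ (A q) ≤ (P.card : ℝ≥0∞) * (Γ * p0e) ^ M := by
    calc ∑ q ∈ P, μ (A q) ≤ ∑ _q ∈ P, (Γ * p0e) ^ M := Finset.sum_le_sum hcount
      _ = (P.card : ℝ≥0∞) * (Γ * p0e) ^ M := by rw [Finset.sum_const, nsmul_eq_mul]
  have hPcard : P.card ≤ (T * 𝒞.card) ^ M := by
    calc P.card ≤ ((Finset.Icc 1 T ×ˢ 𝒞).powersetCard M).card :=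
          Finset.card_le_card (Finset.filter_subset _ _)
      _ = (T * 𝒞.card).choose M := by
          rw [Finset.card_powersetCard, Finset.card_product, Nat.card_Icc]
          norm_num
      _ ≤ (T * 𝒞.card) ^ M := Nat.choose_le_pow _ _
  -- Step 4 : numeric bound
  have hB1 : 0 < B := Nat.choose_pos hMK2
  have hkey : ((T * 𝒞.card : ℕ) : ℝ≥0∞) ^ M * (Γ * p0e) ^ M
      ≤ (B : ℝ≥0∞) * ENNReal.ofReal ((2:ℝ) ^ (-lam * (n:ℝ))) := by
    have hΓp : Γ * p0e = ENNReal.ofReal (γ ^ 3 * p0) := by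
      rw [hΓdef, hp0edef, ENNReal.ofReal_mul (le_of_lt hγ3)]
    have hy0 : (0:ℝ) ≤ γ ^ 3 * p0 := mul_nonneg hγ3.le hp00.le
    have hL1 : ((T * 𝒞.card : ℕ) : ℝ≥0∞) ^ M * (Γ * p0e) ^ M
        = ENNReal.ofReal (((T * 𝒞.card : ℕ) : ℝ) ^ M * (γ ^ 3 * p0) ^ M) := by
      rw [hΓp, ← ENNReal.ofReal_natCast (T * 𝒞.card),
        ← ENNReal.ofReal_pow (Nat.cast_nonneg _), ← ENNReal.ofReal_pow hy0,
        ← ENNReal.ofReal_mul (pow_nonneg (Nat.cast_nonneg _) M)]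
    have hL2 : (B : ℝ≥0∞) * ENNReal.ofReal ((2:ℝ) ^ (-lam * (n:ℝ)))
        = ENNReal.ofReal ((B:ℝ) * (2:ℝ) ^ (-lam * (n:ℝ))) := by
      rw [← ENNReal.ofReal_natCast B, ← ENNReal.ofReal_mul (Nat.cast_nonneg _)]
    rw [hL1, hL2]
    apply ENNReal.ofReal_le_ofReal
    -- real inequality
    have hTR : (T:ℝ) ≤ R := Nat.floor_le hR0
    have hbase : ((T * 𝒞.card : ℕ) : ℝ) * (γ ^ 3 * p0) ≤ γ ^ 3 * (2:ℝ) ^ ((b - g) * (n:ℝ)) := by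
      have hTC : ((T * 𝒞.card : ℕ) : ℝ) ≤ R * (2:ℝ) ^ (b * (n:ℝ)) := by
        push_cast
        exact mul_le_mul hTR h𝒞card (Nat.cast_nonneg _) hR0
      have hprod : R * (2:ℝ) ^ (b * (n:ℝ)) * p0 = (2:ℝ) ^ ((b - g) * (n:ℝ)) := by
        rw [hRdef, hp0def, ← Real.rpow_add (by norm_num), ← Real.rpow_add (by norm_num)]
        ring_nf
      calc ((T * 𝒞.card : ℕ) : ℝ) * (γ ^ 3 * p0)
          ≤ (R * (2:ℝ) ^ (b * (n:ℝ))) * (γ ^ 3 * p0) := by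
            apply mul_le_mul_of_nonneg_right hTC hy0
        _ = γ ^ 3 * (R * (2:ℝ) ^ (b * (n:ℝ)) * p0) := by ring
        _ = γ ^ 3 * (2:ℝ) ^ ((b - g) * (n:ℝ)) := by rw [hprod]
    have hLHS : ((T * 𝒞.card : ℕ) : ℝ) ^ M * (γ ^ 3 * p0) ^ M
        ≤ (γ ^ 3 * (2:ℝ) ^ ((b - g) * (n:ℝ))) ^ M := by
      rw [← mul_pow]
      exact pow_le_pow_left₀ (mul_nonneg (Nat.cast_nonneg _) hy0) hbase M
    have hBlow : (X / 4) ^ M / (Nat.factorial M : ℝ) ≤ (B:ℝ) := by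
      have h1 : ((K2 + 1 - M : ℕ) ^ M : ℝ) / (Nat.factorial M : ℝ) ≤ K2.choose M :=
        Nat.pow_le_choose M K2
      have h2 : (X / 4) ^ M ≤ ((K2 + 1 - M : ℕ) : ℝ) ^ M :=
        pow_le_pow_left₀ (by positivity) hW1 M
      have hfact : (0:ℝ) < (Nat.factorial M : ℝ) := by
        exact_mod_cast Nat.factorial_pos M
      calc (X / 4) ^ M / (Nat.factorial M : ℝ)
          ≤ ((K2 + 1 - M : ℕ) : ℝ) ^ M / (Nat.factorial M : ℝ) :=
            (div_le_div_iff_of_pos_right hfact).2 h2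
        _ ≤ (B:ℝ) := by
            refine le_trans (le_of_eq ?_) h1
            push_cast
            ring
    have hfinal : (γ ^ 3 * (2:ℝ) ^ ((b - g) * (n:ℝ))) ^ M
        ≤ ((X / 4) ^ M / (Nat.factorial M : ℝ)) * (2:ℝ) ^ (-lam * (n:ℝ)) := by
      -- reduce to hA3
      have hXeq : (X / 4) ^ M = ((2:ℝ) ^ (c * (n:ℝ))) ^ M / (4 * n) ^ M := by
        rw [hXdef, div_div, div_pow, mul_comm ((n:ℝ)) (4:ℝ)]
      have hmain : (γ ^ 3) ^ M * (Nat.factorial M : ℝ) * (4 * (n:ℝ)) ^ M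
          * (2:ℝ) ^ (lam * (n:ℝ)) * ((2:ℝ) ^ ((b - g) * (n:ℝ))) ^ M
          ≤ ((2:ℝ) ^ (c * (n:ℝ))) ^ M := by
        have hpowM : ((2:ℝ) ^ ((b - g) * (n:ℝ))) ^ M = (2:ℝ) ^ ((b - g) * (n:ℝ) * M) := by
          rw [← Real.rpow_natCast ((2:ℝ) ^ ((b - g) * (n:ℝ))) M, ← Real.rpow_mul (by norm_num)]
        have hpowM' : ((2:ℝ) ^ (c * (n:ℝ))) ^ M = (2:ℝ) ^ (c * (n:ℝ) * M) := by
          rw [← Real.rpow_natCast ((2:ℝ) ^ (c * (n:ℝ))) M, ← Real.rpow_mul (by norm_num)]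
        rw [hpowM, hpowM']
        have hexp : (2:ℝ) ^ (lam * (n:ℝ)) * (2:ℝ) ^ ((b - g) * (n:ℝ) * M)
            * (2:ℝ) ^ (δ * (n:ℝ)) ≤ (2:ℝ) ^ (c * (n:ℝ) * M) := by
          rw [← Real.rpow_add (by norm_num), ← Real.rpow_add (by norm_num)]
          apply Real.rpow_le_rpow_of_exponent_le (by norm_num)
          have h9 : 0 ≤ (n:ℝ) * (δ * M - (lam + δ)) := mul_nonneg hnR.le (by linarith)
          rw [hδdef] at h9 ⊢
          nlinarith [h9]
        have h43 : (γ ^ 3) ^ M * (Nat.factorial M : ℝ) * (4 * (n:ℝ)) ^ M ≤ (2:ℝ) ^ (δ * (n:ℝ)) := by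
          rw [h2δn, mul_pow]
          calc (γ ^ 3) ^ M * (Nat.factorial M : ℝ) * ((4:ℝ) ^ M * (n:ℝ) ^ M)
              = (γ ^ 3) ^ M * (Nat.factorial M : ℝ) * 4 ^ M * (n:ℝ) ^ M := by ring
            _ ≤ ((2:ℝ) ^ δ) ^ n := hA3
        calc (γ ^ 3) ^ M * (Nat.factorial M : ℝ) * (4 * (n:ℝ)) ^ M
            * (2:ℝ) ^ (lam * (n:ℝ)) * (2:ℝ) ^ ((b - g) * (n:ℝ) * M)
            ≤ (2:ℝ) ^ (δ * (n:ℝ)) * (2:ℝ) ^ (lam * (n:ℝ)) * (2:ℝ) ^ ((b - g) * (n:ℝ) * M) := by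
              apply mul_le_mul_of_nonneg_right (mul_le_mul_of_nonneg_right h43 (by positivity)) (by positivity)
          _ = (2:ℝ) ^ (lam * (n:ℝ)) * (2:ℝ) ^ ((b - g) * (n:ℝ) * M) * (2:ℝ) ^ (δ * (n:ℝ)) := by ring
          _ ≤ (2:ℝ) ^ (c * (n:ℝ) * M) := hexp
      -- rearrange hmain into hfinal
      have hU : (0:ℝ) < (4 * (n:ℝ)) ^ M := by positivity
      have hJ : (0:ℝ) < (Nat.factorial M : ℝ) := by exact_mod_cast Nat.factorial_pos M
      have hLm : (0:ℝ) < (2:ℝ) ^ (lam * (n:ℝ)) := Real.rpow_pos_of_pos (by norm_num) _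
      rw [hXeq]
      rw [show -lam * (n:ℝ) = -(lam * (n:ℝ)) by ring, Real.rpow_neg (by norm_num)]
      rw [mul_pow]
      have heq2 : ((2:ℝ) ^ (c * (n:ℝ))) ^ M / (4 * (n:ℝ)) ^ M / (Nat.factorial M : ℝ)
          * ((2:ℝ) ^ (lam * (n:ℝ)))⁻¹
          = ((2:ℝ) ^ (c * (n:ℝ))) ^ M
            / ((4 * (n:ℝ)) ^ M * (Nat.factorial M : ℝ) * (2:ℝ) ^ (lam * (n:ℝ))) := by
        field_simp
      rw [heq2, le_div_iff₀ (by positivity)]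
      calc (γ ^ 3) ^ M * ((2:ℝ) ^ ((b - g) * (n:ℝ))) ^ M
            * ((4 * (n:ℝ)) ^ M * (Nat.factorial M : ℝ) * (2:ℝ) ^ (lam * (n:ℝ)))
          = (γ ^ 3) ^ M * (Nat.factorial M : ℝ) * (4 * (n:ℝ)) ^ M
            * (2:ℝ) ^ (lam * (n:ℝ)) * ((2:ℝ) ^ ((b - g) * (n:ℝ))) ^ M := by ring
        _ ≤ ((2:ℝ) ^ (c * (n:ℝ))) ^ M := hmain
    calc ((T * 𝒞.card : ℕ) : ℝ) ^ M * (γ ^ 3 * p0) ^ M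
        ≤ (γ ^ 3 * (2:ℝ) ^ ((b - g) * (n:ℝ))) ^ M := hLHS
      _ ≤ ((X / 4) ^ M / (Nat.factorial M : ℝ)) * (2:ℝ) ^ (-lam * (n:ℝ)) := hfinal
      _ ≤ (B:ℝ) * (2:ℝ) ^ (-lam * (n:ℝ)) := by
          apply mul_le_mul_of_nonneg_right hBlow (by positivity)
  -- assemble
  have hchain : (B : ℝ≥0∞) * μ F ≤ (B : ℝ≥0∞) * ENNReal.ofReal ((2:ℝ) ^ (-lam * (n:ℝ))) := by
    refine le_trans hBF (le_trans hsumP (le_trans ?_ hkey))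
    apply mul_le_mul_left
    exact_mod_cast Nat.cast_le.2 hPcard
  have hμF : μ F ≤ ENNReal.ofReal ((2:ℝ) ^ (-lam * (n:ℝ))) := by
    have hB0 : (B : ℝ≥0∞) ≠ 0 := by exact_mod_cast hB1.ne'
    have hBtop : (B : ℝ≥0∞) ≠ ⊤ := ENNReal.natCast_ne_top B
    exact (ENNReal.mul_le_mul_iff_right hB0 hBtop).1 hchain
  exact le_trans (measure_mono hEF) hμF
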